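/- The graph C(D̃₆) (points {0,...,6}, lines {0,2},{1,2},{2,3},{3,4},{4,5},{4,6}) has exactly 168 Veldkamp lines of size three. -/
import Mathlib

open Finset

def IsHyp {n : ℕ} (E : Finset (Finset (Fin n))) (H : Finset (Fin n)) : Prop :=
  H ≠ Finset.univ ∧ ∀ e ∈ E, e ⊆ H ∨ (e ∩ H).card = 1

def IsVLine {n : ℕ} (E : Finset (Finset (Fin n))) (T : Finset (Finset (Fin n))) : Prop :=
  ∃ H1 H2 H3 : Finset (Fin n), IsHyp E H1 ∧ IsHyp E H2 ∧ IsHyp E H3 ∧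
    H1 ≠ H2 ∧ H1 ≠ H3 ∧ H2 ≠ H3 ∧ H3 = (symmDiff H1 H2)ᶜ ∧ T = {H1, H2, H3}
def edgesD6 : Finset (Finset (Fin 7)) := {{0,2},{1,2},{2,3},{3,4},{4,5},{4,6}}

instance {n : ℕ} (E : Finset (Finset (Fin n))) (H : Finset (Fin n)) :
    Decidable (IsHyp E H) := by unfold IsHyp; infer_instance

/-- decode a bitmask to a subset of Fin 7 -/
def dec (m : ℕ) : Finset (Fin 7) := univ.filter (fun i => m.testBit i.val)

def HN : Finset ℕ := {20, 21, 22, 23, 27, 28, 29, 30, 31, 52, 53, 54, 55, 59, 60, 61, 62, 63, 84, 85, 86, 87, 91, 92, 93, 94, 95, 107, 108, 109, 110, 111, 116, 117, 118, 119, 123, 124, 125, 126}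

set_option maxRecDepth 100000 in
set_option maxHeartbeats 4000000 in
lemma hypIff : ∀ H : Finset (Fin 7), IsHyp edgesD6 H ↔ H ∈ HN.image dec := by decide

set_option maxRecDepth 100000 in
set_option maxHeartbeats 4000000 in
lemma dec_inj : ∀ m < 128, ∀ m' < 128, dec m = dec m' → m = m' := by decide

lemma HN_lt : ∀ m ∈ HN, m < 128 := by decide

lemma xor_lt {a b : ℕ} (ha : a < 128) (hb : b < 128) : 127 ^^^ a ^^^ b < 128 := by
  have h7 : (128:ℕ) = 2^7 := by norm_num
  rw [h7] at *
  exact Nat.xor_lt_two_pow (Nat.xor_lt_two_pow (by norm_num) ha) hb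

lemma xswap (k a b : ℕ) : k ^^^ a ^^^ b = k ^^^ b ^^^ a := by
  rw [Nat.xor_assoc, Nat.xor_assoc, Nat.xor_comm a b]

lemma xrec (k a b : ℕ) : k ^^^ a ^^^ (k ^^^ a ^^^ b) = b := by
  rw [← Nat.xor_assoc (k ^^^ a) (k ^^^ a) b, Nat.xor_self, Nat.zero_xor]

lemma bridge (a b : ℕ) : dec (127 ^^^ a ^^^ b) = (symmDiff (dec a) (dec b))ᶜ := by
  ext i
  have h127 : Nat.testBit 127 i.val = true := by fin_cases i <;> rfl
  simp only [dec, mem_filter, mem_univ, true_and, Finset.mem_compl,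
    Finset.mem_symmDiff, Nat.testBit_xor, h127]
  cases ha : a.testBit i.val <;> cases hb : b.testBit i.val <;> simp [ha, hb]

def QC (p : ℕ × ℕ) : Prop :=
  p.1 < p.2 ∧ p.2 < 127 ^^^ p.1 ^^^ p.2 ∧ (127 ^^^ p.1 ^^^ p.2) ∈ HN

instance : DecidablePred QC := by unfold QC; infer_instance

def S : Finset (Finset (Finset (Fin 7))) :=
  ((HN ×ˢ HN).filter QC).image
    (fun p => ({p.1, p.2, 127 ^^^ p.1 ^^^ p.2} : Finset ℕ).image dec)

variable {α : Type*} [DecidableEq α]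

lemma t132 (x y z : α) : ({x, z, y} : Finset α) = {x, y, z} := by ext t; simp; tauto
lemma t312 (x y z : α) : ({z, x, y} : Finset α) = {x, y, z} := by ext t; simp; tauto
lemma t213 (x y z : α) : ({y, x, z} : Finset α) = {x, y, z} := by ext t; simp; tauto
lemma t231 (x y z : α) : ({y, z, x} : Finset α) = {x, y, z} := by ext t; simp; tauto
lemma t321 (x y z : α) : ({z, y, x} : Finset α) = {x, y, z} := by ext t; simp; tauto

lemma setEq : {T : Finset (Finset (Fin 7)) | IsVLine edgesD6 T} = ↑S := by
  ext T
  simp only [Set.mem_setOf_eq, S, coe_image, Set.mem_image, mem_coe]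
  constructor
  · rintro ⟨H1, H2, H3, h1, h2, h3, d12, d13, d23, rfl, rfl⟩
    obtain ⟨a, ha, rfl⟩ := mem_image.1 ((hypIff H1).1 h1)
    obtain ⟨b, hb, rfl⟩ := mem_image.1 ((hypIff H2).1 h2)
    obtain ⟨c, hc, hdc⟩ := mem_image.1 ((hypIff _).1 h3)
    have hla := HN_lt a ha
    have hlb := HN_lt b hb
    have hlc := HN_lt c hc
    have hcx : c = 127 ^^^ a ^^^ b := by
      apply dec_inj c hlc _ (xor_lt hla hlb)
      rw [hdc, bridge]
    have hab : a ≠ b := fun h => d12 (h ▸ rfl)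
    have hac : a ≠ c := fun h => d13 (by rw [← hdc, h])
    have hbc : b ≠ c := fun h => d23 (by rw [← hdc, h])
    -- the six xor identities
    have e_ab : 127 ^^^ a ^^^ b = c := hcx.symm
    have e_ba : 127 ^^^ b ^^^ a = c := by rw [xswap]; exact hcx.symm
    have e_ac : 127 ^^^ a ^^^ c = b := by rw [hcx, xrec]
    have e_ca : 127 ^^^ c ^^^ a = b := by rw [xswap]; exact e_ac
    have e_bc : 127 ^^^ b ^^^ c = a := by rw [hcx, xswap 127 a b, xrec]
    have e_cb : 127 ^^^ c ^^^ b = a := by rw [xswap]; exact e_bc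
    rw [← hdc]
    rcases lt_trichotomy a b with h1' | h1' | h1'
    · rcases lt_trichotomy b c with h2' | h2' | h2'
      · -- a < b < c : pair (a, b)
        refine ⟨(a, b), mem_filter.2 ⟨mem_product.2 ⟨ha, hb⟩,
          show QC (a, b) from ⟨h1', e_ab.symm ▸ h2', e_ab.symm ▸ hc⟩⟩, ?_⟩
        show ({a, b, 127 ^^^ a ^^^ b} : Finset ℕ).image dec = _
        rw [e_ab, image_insert, image_insert, image_singleton]
      · exact absurd h2' hbc
      · rcases lt_trichotomy a c with h3' | h3' | h3'
        · -- a < c < b : pair (a, c)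
          refine ⟨(a, c), mem_filter.2 ⟨mem_product.2 ⟨ha, hc⟩,
            show QC (a, c) from ⟨h3', e_ac.symm ▸ h2', e_ac.symm ▸ hb⟩⟩, ?_⟩
          show ({a, c, 127 ^^^ a ^^^ c} : Finset ℕ).image dec = _
          rw [e_ac, image_insert, image_insert, image_singleton, t132]
        · exact absurd h3' hac
        · -- c < a < b : pair (c, a)
          refine ⟨(c, a), mem_filter.2 ⟨mem_product.2 ⟨hc, ha⟩,
            show QC (c, a) from ⟨h3', e_ca.symm ▸ h1', e_ca.symm ▸ hb⟩⟩, ?_⟩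
          show ({c, a, 127 ^^^ c ^^^ a} : Finset ℕ).image dec = _
          rw [e_ca, image_insert, image_insert, image_singleton, t312]
    · exact absurd h1' hab
    · rcases lt_trichotomy a c with h2' | h2' | h2'
      · -- b < a < c : pair (b, a)
        refine ⟨(b, a), mem_filter.2 ⟨mem_product.2 ⟨hb, ha⟩,
          show QC (b, a) from ⟨h1', e_ba.symm ▸ h2', e_ba.symm ▸ hc⟩⟩, ?_⟩
        show ({b, a, 127 ^^^ b ^^^ a} : Finset ℕ).image dec = _
        rw [e_ba, image_insert, image_insert, image_singleton, t213]
      · exact absurd h2' hac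
      · rcases lt_trichotomy b c with h3' | h3' | h3'
        · -- b < c < a : pair (b, c)
          refine ⟨(b, c), mem_filter.2 ⟨mem_product.2 ⟨hb, hc⟩,
            show QC (b, c) from ⟨h3', e_bc.symm ▸ h2', e_bc.symm ▸ ha⟩⟩, ?_⟩
          show ({b, c, 127 ^^^ b ^^^ c} : Finset ℕ).image dec = _
          rw [e_bc, image_insert, image_insert, image_singleton, t231]
        · exact absurd h3' hbc
        · -- c < b < a : pair (c, b)
          refine ⟨(c, b), mem_filter.2 ⟨mem_product.2 ⟨hc, hb⟩,
            show QC (c, b) from ⟨h3', e_cb.symm ▸ h1', e_cb.symm ▸ ha⟩⟩, ?_⟩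
          show ({c, b, 127 ^^^ c ^^^ b} : Finset ℕ).image dec = _
          rw [e_cb, image_insert, image_insert, image_singleton, t321]
  · rintro ⟨⟨a, b⟩, hp, rfl⟩
    rw [mem_filter, mem_product] at hp
    obtain ⟨⟨ha, hb⟩, hab, hbc, hcmem⟩ := hp
    dsimp only at ha hb hab hbc hcmem ⊢
    have hla := HN_lt a ha
    have hlb := HN_lt b hb
    have hlc := xor_lt hla hlb
    refine ⟨dec a, dec b, dec (127 ^^^ a ^^^ b), ?_, ?_, ?_, ?_, ?_, ?_, ?_, ?_⟩
    · exact (hypIff _).2 (mem_image_of_mem dec ha)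
    · exact (hypIff _).2 (mem_image_of_mem dec hb)
    · exact (hypIff _).2 (mem_image_of_mem dec hcmem)
    · intro h; exact absurd (dec_inj a hla b hlb h) (by omega)
    · intro h; exact absurd (dec_inj a hla _ hlc h) (by omega)
    · intro h; exact absurd (dec_inj b hlb _ hlc h) (by omega)
    · exact bridge a b
    · simp only [image_insert, image_singleton]

lemma S_card : S.card = ((HN ×ˢ HN).filter QC).card := by
  apply Finset.card_image_of_injOn
  rintro ⟨a, b⟩ hp ⟨a', b'⟩ hq heq
  rw [mem_coe, mem_filter, mem_product] at hp hq
  obtain ⟨⟨ha, hb⟩, oab, obc, hc⟩ := hp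
  obtain ⟨⟨ha', hb'⟩, oab', obc', hc'⟩ := hq
  dsimp only at ha hb oab obc hc ha' hb' oab' obc' hc' heq
  have hla := HN_lt a ha
  have hlb := HN_lt b hb
  have hlc := xor_lt hla hlb
  have hla' := HN_lt a' ha'
  have hlb' := HN_lt b' hb'
  have hlc' := xor_lt hla' hlb'
  -- from equal images of dec, conclude equal Nat triples
  have htrip : ({a, b, 127 ^^^ a ^^^ b} : Finset ℕ) = {a', b', 127 ^^^ a' ^^^ b'} := by
    ext m
    constructor
    · intro hm
      have hmlt : m < 128 := by
        simp only [mem_insert, mem_singleton] at hm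
        rcases hm with rfl | rfl | rfl <;> assumption
      have : dec m ∈ ({a', b', 127 ^^^ a' ^^^ b'} : Finset ℕ).image dec := by
        rw [← heq]; exact mem_image_of_mem dec hm
      obtain ⟨m', hm', hdm⟩ := mem_image.1 this
      have hm'lt : m' < 128 := by
        simp only [mem_insert, mem_singleton] at hm'
        rcases hm' with rfl | rfl | rfl <;> assumption
      rwa [dec_inj m' hm'lt m hmlt hdm] at hm'
    · intro hm
      have hmlt : m < 128 := by
        simp only [mem_insert, mem_singleton] at hm
        rcases hm with rfl | rfl | rfl <;> assumption
      have : dec m ∈ ({a, b, 127 ^^^ a ^^^ b} : Finset ℕ).image dec := by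
        rw [heq]; exact mem_image_of_mem dec hm
      obtain ⟨m', hm', hdm⟩ := mem_image.1 this
      have hm'lt : m' < 128 := by
        simp only [mem_insert, mem_singleton] at hm'
        rcases hm' with rfl | rfl | rfl <;> assumption
      rwa [dec_inj m' hm'lt m hmlt hdm] at hm'
  -- now both triples are sorted; conclude equality of pairs
  have mq1 : a' ∈ ({a, b, 127 ^^^ a ^^^ b} : Finset ℕ) := by
    rw [htrip]; simp
  have mq2 : b' ∈ ({a, b, 127 ^^^ a ^^^ b} : Finset ℕ) := by
    rw [htrip]; simp
  have mp1 : a ∈ ({a', b', 127 ^^^ a' ^^^ b'} : Finset ℕ) := by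
    rw [← htrip]; simp
  have mp2 : b ∈ ({a', b', 127 ^^^ a' ^^^ b'} : Finset ℕ) := by
    rw [← htrip]; simp
  simp only [mem_insert, mem_singleton] at mq1 mq2 mp1 mp2
  have : a = a' ∧ b = b' := by
    rcases mq1 with h | h | h <;> rcases mq2 with h' | h' | h' <;>
      rcases mp1 with g | g | g <;> rcases mp2 with g' | g' | g' <;> omega
  simp [Prod.ext_iff, this.1, this.2]

set_option maxRecDepth 100000 in
lemma count168 : ((HN ×ˢ HN).filter QC).card = 168 := by decide

theorem stmt12 : {T : Finset (Finset (Fin 7)) | IsVLine edgesD6 T}.ncard = 168 := by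
  rw [setEq, Set.ncard_coe_finset, S_card, count168]
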